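/- Let β > 0, L > 0, and let k be the largest integer strictly less than β. There exists a constant C depending only on β and L such that for all functions f, g : [0,1] → ℝ with |f| ≤ 1, |g| ≤ 1, f ∈ Σ(β,L), and g ∈ Σ(β,L), the pointwise product f·g belongs to Σ(β,C), i.e. |(fg)^{(k)}(x) - (fg)^{(k)}(y)| ≤ C|x-y|^{β-k} for all x,y ∈ [0,1]. -/

import Mathlib

/-!
By the Leibniz rule `(fg)^{(k)} = ∑ C(k,j) f^{(j)} g^{(k-j)}`, it suffices that every `f^{(j)}`,
`j ≤ k`, is bounded and `(β - k)`-Hölder with constants depending only on `k` and `L`.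
Since `|f| ≤ 1`, iterating the mean value theorem yields, for each `j`, a point where
`|f^{(j)}| ≤ (2·3^j)^j`. Starting from `j = k`, whose oscillation is at most `L`, and going down,
the mean value theorem spreads these pointwise bounds to uniform bounds on `[0,1]`. The lower
derivatives are then Lipschitz, hence `(β - k)`-Hölder on `[0,1]` because `β - k ≤ 1`.
-/

open Set Filter Topology

theorem exists_derivWithin_eq_slope {F : ℝ → ℝ} {s : Set ℝ} (hF : DifferentiableOn ℝ F s)
    {a b : ℝ} (hab : a < b) (hsub : Icc a b ⊆ s) :
    ∃ c ∈ Ioo a b, derivWithin F s c = (F b - F a) / (b - a) := by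
  refine exists_hasDerivAt_eq_slope F (derivWithin F s) hab (hF.continuousOn.mono hsub)
    fun c hc => ?_
  have hs : s ∈ 𝓝 c := mem_of_superset (Icc_mem_nhds hc.1 hc.2) hsub
  rw [derivWithin_of_mem_nhds hs]
  exact ((hF c (hsub (Ioo_subset_Icc_self hc))).differentiableAt hs).hasDerivAt

/-- Applying the induction hypothesis on the outer thirds of `[a, b]` gives two points at distance
at least `(b - a) / 3` where the `n`-th derivative is small; the mean value theorem between them
bounds the `(n + 1)`-st derivative somewhere in between. -/
theorem exists_abs_iteratedDerivWithin_le {s : Set ℝ} (hs : UniqueDiffOn ℝ s) {g : ℝ → ℝ}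
    {n : ℕ} (hg : ContDiffOn ℝ n g s) {a b M : ℝ} (hab : a < b) (hsub : Icc a b ⊆ s)
    (hM : ∀ x ∈ Icc a b, |g x| ≤ M) :
    ∃ ξ ∈ Icc a b, |iteratedDerivWithin n g s ξ| ≤ (2 * 3 ^ n / (b - a)) ^ n * M := by
  induction n generalizing a b with
  | zero => exact ⟨a, left_mem_Icc.2 hab.le, by simpa using hM a (left_mem_Icc.2 hab.le)⟩
  | succ n ih =>
    set h := b - a
    have hh : 0 < h := sub_pos.2 hab
    have hM0 : 0 ≤ M := (abs_nonneg _).trans (hM a (left_mem_Icc.2 hab.le))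
    have hgn : ContDiffOn ℝ n g s := hg.of_le (by norm_cast; omega)
    obtain ⟨ξ₁, hξ₁, hξ₁M⟩ := ih hgn (a := a) (b := a + h / 3) (by linarith)
      ((Icc_subset_Icc le_rfl (by linarith)).trans hsub)
      fun x hx => hM x ⟨hx.1, by linarith [hx.2]⟩
    obtain ⟨ξ₂, hξ₂, hξ₂M⟩ := ih hgn (a := b - h / 3) (b := b) (by linarith)
      ((Icc_subset_Icc (by linarith) le_rfl).trans hsub)
      fun x hx => hM x ⟨by linarith [hx.1], hx.2⟩
    have hsep : h / 3 ≤ ξ₂ - ξ₁ := by linarith [hξ₁.2, hξ₂.1]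
    have hξ : Icc ξ₁ ξ₂ ⊆ Icc a b := Icc_subset_Icc hξ₁.1 hξ₂.2
    obtain ⟨η, hη, hslope⟩ := exists_derivWithin_eq_slope
      (hg.differentiableOn_iteratedDerivWithin (m := n) (by norm_cast; omega) hs) (by linarith)
      (hξ.trans hsub)
    refine ⟨η, hξ (Ioo_subset_Icc_self hη), ?_⟩
    set q := 2 * 3 ^ (n + 1) / h
    have hq : 2 * 3 ^ n / (a + h / 3 - a) = q ∧ 2 * 3 ^ n / (b - (b - h / 3)) = q := by
      constructor <;> (field_simp; ring)
    rw [hq.1] at hξ₁M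
    rw [hq.2] at hξ₂M
    have h6q : 6 / h ≤ q := by
      refine div_le_div_of_nonneg_right ?_ hh.le
      calc (6 : ℝ) = 2 * 3 ^ 1 := by norm_num
        _ ≤ 2 * 3 ^ (n + 1) := by gcongr <;> norm_num
    rw [iteratedDerivWithin_succ, hslope, abs_div, abs_of_pos (show 0 < ξ₂ - ξ₁ by linarith)]
    calc |iteratedDerivWithin n g s ξ₂ - iteratedDerivWithin n g s ξ₁| / (ξ₂ - ξ₁)
        ≤ 2 * (q ^ n * M) / (h / 3) := by
          gcongr
          exact (abs_sub _ _).trans (by linarith)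
      _ = 6 / h * (q ^ n * M) := by field_simp; ring
      _ ≤ q * (q ^ n * M) := by gcongr
      _ = q ^ (n + 1) * M := by ring

theorem abs_sub_le_of_abs_derivWithin_le {F : ℝ → ℝ} {s : Set ℝ} {B : ℝ} (hs : Convex ℝ s)
    (hF : DifferentiableOn ℝ F s) (hB : ∀ z ∈ s, |derivWithin F s z| ≤ B) {x y : ℝ}
    (hx : x ∈ s) (hy : y ∈ s) : |F x - F y| ≤ B * |x - y| := by
  simpa only [Real.norm_eq_abs] using hs.norm_image_sub_le_of_norm_derivWithin_le hF hB hy hx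

theorem abs_iteratedDerivWithin_le_of_oscillation_le {f : ℝ → ℝ} {k : ℕ} {L : ℝ}
    (hf : ContDiffOn ℝ k f (Icc 0 1)) (hf1 : ∀ x ∈ Icc (0 : ℝ) 1, |f x| ≤ 1)
    (hosc : ∀ x ∈ Icc (0 : ℝ) 1, ∀ y ∈ Icc (0 : ℝ) 1,
      |iteratedDerivWithin k f (Icc 0 1) x - iteratedDerivWithin k f (Icc 0 1) y| ≤ L) :
    ∀ j ≤ k, ∀ x ∈ Icc (0 : ℝ) 1,
      |iteratedDerivWithin j f (Icc 0 1) x| ≤ (k + 1) * (2 * 3 ^ k) ^ k + L := by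
  have hs : UniqueDiffOn ℝ (Icc (0 : ℝ) 1) := uniqueDiffOn_Icc zero_lt_one
  set K : ℝ := (2 * 3 ^ k) ^ k
  have hpoint : ∀ j ≤ k, ∃ ξ ∈ Icc (0 : ℝ) 1, |iteratedDerivWithin j f (Icc 0 1) ξ| ≤ K := by
    intro j hj
    obtain ⟨ξ, hξ, hξK⟩ := exists_abs_iteratedDerivWithin_le hs (hf.of_le (by exact_mod_cast hj))
      zero_lt_one subset_rfl hf1
    refine ⟨ξ, hξ, hξK.trans ?_⟩
    rw [sub_zero, div_one, mul_one]
    have hbase : (1 : ℝ) ≤ 2 * 3 ^ k :=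
      one_le_two.trans (le_mul_of_one_le_right zero_le_two (one_le_pow₀ (by norm_num)))
    calc (2 * 3 ^ j : ℝ) ^ j ≤ (2 * 3 ^ k) ^ j :=
          pow_le_pow_left₀ (by positivity) (by gcongr; norm_num) j
      _ ≤ K := pow_le_pow_right₀ hbase hj
  intro j hj
  suffices h : ∀ x ∈ Icc (0 : ℝ) 1, |iteratedDerivWithin j f (Icc 0 1) x| ≤ (k - j + 1) * K + L from
    fun x hx => (h x hx).trans (by gcongr; linarith [(Nat.cast_nonneg j : (0 : ℝ) ≤ j)])
  induction hj using Nat.decreasingInduction with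
  | self =>
    intro x hx
    obtain ⟨ξ, hξ, hξK⟩ := hpoint k le_rfl
    have htri := abs_sub_abs_le_abs_sub (iteratedDerivWithin k f (Icc 0 1) x)
      (iteratedDerivWithin k f (Icc 0 1) ξ)
    linarith [hosc x hx ξ hξ]
  | of_succ j hjk ih =>
    intro x hx
    obtain ⟨ξ, hξ, hξK⟩ := hpoint j hjk.le
    have hlip := abs_sub_le_of_abs_derivWithin_le (convex_Icc 0 1)
      (hf.differentiableOn_iteratedDerivWithin (m := j) (by exact_mod_cast hjk) hs)
      (fun z hz => by rw [← iteratedDerivWithin_succ]; exact ih z hz) hx hξ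
    have hB : 0 ≤ ((k : ℝ) - (j + 1 : ℕ) + 1) * K + L := (abs_nonneg _).trans (ih x hx)
    have htri := abs_sub_abs_le_abs_sub (iteratedDerivWithin j f (Icc 0 1) x)
      (iteratedDerivWithin j f (Icc 0 1) ξ)
    replace hlip := hlip.trans
      (mul_le_of_le_one_right hB (abs_sub_le_of_nonneg_of_le hx.1 hx.2 hξ.1 hξ.2))
    push_cast at hlip ⊢
    linarith

theorem abs_iteratedDerivWithin_sub_le_of_holder {f : ℝ → ℝ} {k : ℕ} {γ L B : ℝ} (hγ : γ ≤ 1)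
    (hL : 0 ≤ L) (hf : ContDiffOn ℝ k f (Icc 0 1))
    (hB : ∀ j ≤ k, ∀ z ∈ Icc (0 : ℝ) 1, |iteratedDerivWithin j f (Icc 0 1) z| ≤ B)
    (hHolder : ∀ x ∈ Icc (0 : ℝ) 1, ∀ y ∈ Icc (0 : ℝ) 1,
      |iteratedDerivWithin k f (Icc 0 1) x - iteratedDerivWithin k f (Icc 0 1) y| ≤
        L * |x - y| ^ γ)
    {j : ℕ} (hj : j ≤ k) {x y : ℝ} (hx : x ∈ Icc (0 : ℝ) 1) (hy : y ∈ Icc (0 : ℝ) 1) :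
    |iteratedDerivWithin j f (Icc 0 1) x - iteratedDerivWithin j f (Icc 0 1) y| ≤
      (B + L) * |x - y| ^ γ := by
  have hB0 : 0 ≤ B := (abs_nonneg _).trans (hB 0 (Nat.zero_le k) x hx)
  have ht : 0 ≤ |x - y| ^ γ := Real.rpow_nonneg (abs_nonneg _) γ
  rcases hj.lt_or_eq with hjk | rfl
  · calc _ ≤ B * |x - y| :=
          abs_sub_le_of_abs_derivWithin_le (convex_Icc 0 1)
            (hf.differentiableOn_iteratedDerivWithin (m := j) (by exact_mod_cast hjk)
              (uniqueDiffOn_Icc zero_lt_one))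
            (fun z hz => by rw [← iteratedDerivWithin_succ]; exact hB (j + 1) hjk z hz) hx hy
      _ ≤ B * |x - y| ^ γ := by
          gcongr
          exact Real.self_le_rpow_of_le_one (abs_nonneg _)
            (abs_sub_le_of_nonneg_of_le hx.1 hx.2 hy.1 hy.2) hγ
      _ ≤ (B + L) * |x - y| ^ γ := by gcongr; linarith
  · exact (hHolder x hx y hy).trans (by gcongr; linarith)

theorem abs_mul_sub_mul_le {a b c d B D : ℝ} (hb : |b| ≤ B) (hc : |c| ≤ B)
    (hac : |a - c| ≤ D) (hbd : |b - d| ≤ D) : |a * b - c * d| ≤ 2 * B * D :=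
  calc |a * b - c * d| = |(a - c) * b + c * (b - d)| := by ring_nf
    _ ≤ |a - c| * |b| + |c| * |b - d| := by rw [← abs_mul, ← abs_mul]; exact abs_add_le _ _
    _ ≤ D * B + B * D :=
      add_le_add (mul_le_mul hac hb (abs_nonneg _) ((abs_nonneg _).trans hac))
        (mul_le_mul hc hbd (abs_nonneg _) ((abs_nonneg _).trans hb))
    _ = 2 * B * D := by ring

theorem abs_iteratedDerivWithin_mul_sub_le {s : Set ℝ} (hs : UniqueDiffOn ℝ s) {f g : ℝ → ℝ}
    {k : ℕ} {B D : ℝ} (hf : ContDiffOn ℝ k f s) (hg : ContDiffOn ℝ k g s)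
    (hfB : ∀ j ≤ k, ∀ z ∈ s, |iteratedDerivWithin j f s z| ≤ B)
    (hgB : ∀ j ≤ k, ∀ z ∈ s, |iteratedDerivWithin j g s z| ≤ B) {x y : ℝ} (hx : x ∈ s) (hy : y ∈ s)
    (hfD : ∀ j ≤ k, |iteratedDerivWithin j f s x - iteratedDerivWithin j f s y| ≤ D)
    (hgD : ∀ j ≤ k, |iteratedDerivWithin j g s x - iteratedDerivWithin j g s y| ≤ D) :
    |iteratedDerivWithin k (f * g) s x - iteratedDerivWithin k (f * g) s y| ≤
      2 ^ k * (2 * B * D) := by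
  rw [iteratedDerivWithin_mul hx hs (hf x hx) (hg x hx),
    iteratedDerivWithin_mul hy hs (hf y hy) (hg y hy), ← Finset.sum_sub_distrib]
  calc _ ≤ ∑ j ∈ Finset.range (k + 1), (k.choose j : ℝ) * (2 * B * D) := by
        refine (Finset.abs_sum_le_sum_abs _ _).trans (Finset.sum_le_sum fun j hj => ?_)
        have hjk : j ≤ k := Finset.mem_range_succ_iff.1 hj
        rw [mul_assoc, mul_assoc, ← mul_sub, abs_mul, Nat.abs_cast]
        gcongr
        exact abs_mul_sub_mul_le (hgB _ (k.sub_le j) x hx) (hfB j hjk y hy) (hfD j hjk)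
          (hgD _ (k.sub_le j))
    _ = 2 ^ k * (2 * B * D) := by
        rw [← Finset.sum_mul, ← Nat.cast_sum, Nat.sum_range_choose, Nat.cast_pow, Nat.cast_ofNat]

theorem stmt2_general (β L : ℝ) (hL : 0 < L) (k : ℕ)
    (hk₁ : (k : ℝ) < β) (hk₂ : β ≤ (k : ℝ) + 1) :
    ∃ C : ℝ, ∀ f g : ℝ → ℝ,
      ContDiffOn ℝ k f (Icc (0:ℝ) 1) →
      ContDiffOn ℝ k g (Icc (0:ℝ) 1) →
      (∀ x ∈ Icc (0:ℝ) 1, |f x| ≤ 1) →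
      (∀ x ∈ Icc (0:ℝ) 1, |g x| ≤ 1) →
      (∀ x ∈ Icc (0:ℝ) 1, ∀ y ∈ Icc (0:ℝ) 1,
        |iteratedDerivWithin k f (Icc (0:ℝ) 1) x -
          iteratedDerivWithin k f (Icc (0:ℝ) 1) y| ≤ L * |x - y| ^ (β - (k : ℝ))) →
      (∀ x ∈ Icc (0:ℝ) 1, ∀ y ∈ Icc (0:ℝ) 1,
        |iteratedDerivWithin k g (Icc (0:ℝ) 1) x -
          iteratedDerivWithin k g (Icc (0:ℝ) 1) y| ≤ L * |x - y| ^ (β - (k : ℝ))) →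
      ∀ x ∈ Icc (0:ℝ) 1, ∀ y ∈ Icc (0:ℝ) 1,
        |iteratedDerivWithin k (fun t => f t * g t) (Icc (0:ℝ) 1) x -
          iteratedDerivWithin k (fun t => f t * g t) (Icc (0:ℝ) 1) y| ≤
            C * |x - y| ^ (β - (k : ℝ)) := by
  set B : ℝ := (k + 1) * (2 * 3 ^ k) ^ k + L
  refine ⟨2 ^ k * (2 * B * (B + L)), fun f g hf hg hf1 hg1 hfH hgH x hx y hy => ?_⟩
  have hosc : ∀ F : ℝ → ℝ, (∀ u ∈ Icc (0:ℝ) 1, ∀ v ∈ Icc (0:ℝ) 1,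
      |iteratedDerivWithin k F (Icc 0 1) u - iteratedDerivWithin k F (Icc 0 1) v| ≤
        L * |u - v| ^ (β - k)) → ∀ u ∈ Icc (0:ℝ) 1, ∀ v ∈ Icc (0:ℝ) 1,
      |iteratedDerivWithin k F (Icc 0 1) u - iteratedDerivWithin k F (Icc 0 1) v| ≤ L :=
    fun F hF u hu v hv => (hF u hu v hv).trans <| mul_le_of_le_one_right hL.le <|
      Real.rpow_le_one (abs_nonneg _) (abs_sub_le_of_nonneg_of_le hu.1 hu.2 hv.1 hv.2)
        (by linarith)
  have hfB := abs_iteratedDerivWithin_le_of_oscillation_le hf hf1 (hosc f hfH)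
  have hgB := abs_iteratedDerivWithin_le_of_oscillation_le hg hg1 (hosc g hgH)
  have hγ : β - k ≤ 1 := by linarith
  calc _ ≤ 2 ^ k * (2 * B * ((B + L) * |x - y| ^ (β - k))) :=
        abs_iteratedDerivWithin_mul_sub_le (uniqueDiffOn_Icc zero_lt_one) hf hg hfB hgB hx hy
          (fun j hj => abs_iteratedDerivWithin_sub_le_of_holder hγ hL.le hf hfB hfH hj hx hy)
          (fun j hj => abs_iteratedDerivWithin_sub_le_of_holder hγ hL.le hg hgB hgH hj hx hy)
    _ = _ := by ring

/-- The product of two functions in `Σ(β,L)` bounded by 1 belongs to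
`Σ(β,C)` for a constant `C` depending only on `β` and `L`. -/
theorem stmt2 (β L : ℝ) (hβ : 0 < β) (hL : 0 < L) (k : ℕ)
    (hk₁ : (k : ℝ) < β) (hk₂ : β ≤ (k : ℝ) + 1) :
    ∃ C : ℝ, ∀ f g : ℝ → ℝ,
      ContDiffOn ℝ k f (Icc (0:ℝ) 1) →
      ContDiffOn ℝ k g (Icc (0:ℝ) 1) →
      (∀ x ∈ Icc (0:ℝ) 1, |f x| ≤ 1) →
      (∀ x ∈ Icc (0:ℝ) 1, |g x| ≤ 1) →
      (∀ x ∈ Icc (0:ℝ) 1, ∀ y ∈ Icc (0:ℝ) 1,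
        |iteratedDerivWithin k f (Icc (0:ℝ) 1) x -
          iteratedDerivWithin k f (Icc (0:ℝ) 1) y| ≤ L * |x - y| ^ (β - (k : ℝ))) →
      (∀ x ∈ Icc (0:ℝ) 1, ∀ y ∈ Icc (0:ℝ) 1,
        |iteratedDerivWithin k g (Icc (0:ℝ) 1) x -
          iteratedDerivWithin k g (Icc (0:ℝ) 1) y| ≤ L * |x - y| ^ (β - (k : ℝ))) →
      ∀ x ∈ Icc (0:ℝ) 1, ∀ y ∈ Icc (0:ℝ) 1,
        |iteratedDerivWithin k (fun t => f t * g t) (Icc (0:ℝ) 1) x -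
          iteratedDerivWithin k (fun t => f t * g t) (Icc (0:ℝ) 1) y| ≤
            C * |x - y| ^ (β - (k : ℝ)) :=
  stmt2_general β L hL k hk₁ hk₂
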